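/- Let 0 < p, q ≤ ∞ and let k, n be positive integers. Then e_k(id : ℓ_p^n(ℝ) → ℓ_q^n(ℝ)) ≥ 2^{-(k-1)/n} · (vol(B_p^n)/vol(B_q^n))^{1/n}. Consequently there is a constant c_{p,q} > 0 with e_k(id : ℓ_p^n(ℝ) → ℓ_q^n(ℝ)) ≥ c_{p,q}·2^{-(k-1)/n}·n^{1/q - 1/p}. -/

import Mathlib

/-!
If `2^(k-1)` translates of `r • B_q` cover `B_p`, comparing volumes (Lebesgue measure is
translation invariant and scales by `r^n`) gives `vol B_p ≤ 2^(k-1) r^n vol B_q`, which is the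
first bound. For the second, `B_p` contains the cube of half-side `n^(-1/p)`, so
`vol B_p ≥ (2 n^(-1/p))^n`, while `1_{B_q}(x) ≤ exp (n (1 - ∑ |x_i|^q))` integrates to
`vol B_q ≤ (2 e Γ(1/q + 1) n^(-1/q))^n`.
-/

open scoped ENNReal

/-- The `ℓ_p` (quasi-)norm on `ℝ^n`, `0 < p ≤ ∞`. -/
noncomputable def lpnorm (p : ℝ≥0∞) {n : ℕ} (x : Fin n → ℝ) : ℝ :=
  if p = ∞ then ⨆ i, |x i| else (∑ i, |x i| ^ p.toReal) ^ (1 / p.toReal)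

/-- The `k`-th dyadic entropy number of the identity `id : ℓ_p^n(ℝ) → ℓ_q^n(ℝ)`:
the infimum of `r > 0` such that the unit ball of `ℓ_p^n` can be covered by `2^(k-1)`
balls of radius `r` in `ℓ_q^n`. -/
noncomputable def entropyLp (p q : ℝ≥0∞) (n k : ℕ) : ℝ :=
  sInf {r : ℝ | 0 < r ∧ ∃ S : Finset (Fin n → ℝ), S.card ≤ 2 ^ (k - 1) ∧
    ∀ x : Fin n → ℝ, lpnorm p x ≤ 1 → ∃ y ∈ S, lpnorm q (x - y) ≤ r}

open Real Set MeasureTheory Pointwise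

lemma measure_le_card_mul_of_subset_biUnion_vadd_smul {E : Type*} [NormedAddCommGroup E]
    [NormedSpace ℝ E] [MeasurableSpace E] [BorelSpace E] [FiniteDimensional ℝ E]
    (μ : Measure E) [μ.IsAddHaarMeasure] {A B : Set E} {S : Finset E} {r : ℝ}
    (hA : A ⊆ ⋃ y ∈ S, y +ᵥ r • B) :
    μ A ≤ S.card * ENNReal.ofReal (|r| ^ Module.finrank ℝ E) * μ B :=
  calc μ A ≤ μ (⋃ y ∈ S, y +ᵥ r • B) := measure_mono hA
    _ ≤ ∑ y ∈ S, μ (y +ᵥ r • B) := measure_biUnion_finset_le S _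
    _ = S.card * ENNReal.ofReal (|r| ^ Module.finrank ℝ E) * μ B := by
        simp only [measure_vadd, Measure.addHaar_smul, Finset.sum_const, nsmul_eq_mul, mul_assoc,
          abs_pow]

lemma volume_setOf_sum_le_one_le {ι : Type*} [Fintype ι] {f : ℝ → ℝ} {s : ℝ} (hs : 0 ≤ s)
    (hf : Integrable fun u => exp (-s * f u)) :
    volume {x : ι → ℝ | ∑ i, f (x i) ≤ 1} ≤
      ENNReal.ofReal (exp s * (∫ u, exp (-s * f u)) ^ Fintype.card ι) := by
  set F : (ι → ℝ) → ℝ := fun x => exp s * ∏ i, exp (-s * f (x i))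
  have hF : Integrable F := (Integrable.fintype_prod fun _ => hf).const_mul _
  have one_le_F : ∀ x ∈ {x : ι → ℝ | ∑ i, f (x i) ≤ 1}, (1 : ℝ≥0∞) ≤ ENNReal.ofReal (F x) := by
    intro x hx
    rw [← ENNReal.ofReal_one]
    refine ENNReal.ofReal_le_ofReal ?_
    rw [show F x = exp (s + ∑ i, -s * f (x i)) by rw [exp_add, exp_sum], one_le_exp_iff,
      ← Finset.mul_sum]
    nlinarith [show ∑ i, f (x i) ≤ 1 from hx]
  calc volume {x : ι → ℝ | ∑ i, f (x i) ≤ 1}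
      = ∫⁻ _ in {x : ι → ℝ | ∑ i, f (x i) ≤ 1}, 1 := (setLIntegral_one _).symm
    _ ≤ ∫⁻ x in {x : ι → ℝ | ∑ i, f (x i) ≤ 1}, ENNReal.ofReal (F x) :=
        setLIntegral_mono_ae hF.aemeasurable.ennreal_ofReal.restrict (ae_of_all _ one_le_F)
    _ ≤ ∫⁻ x, ENNReal.ofReal (F x) := setLIntegral_le_lintegral _ _
    _ = ENNReal.ofReal (∫ x, F x) :=
        (ofReal_integral_eq_lintegral_ofReal hF (ae_of_all _ fun x => by positivity)).symm
    _ = _ := by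
        rw [integral_const_mul, integral_fintype_prod_volume_eq_pow fun u => exp (-s * f u)]

lemma integral_exp_neg_mul_abs_rpow {t b : ℝ} (ht : 0 < t) (hb : 0 < b) :
    ∫ u, exp (-b * |u| ^ t) = 2 * Gamma (t⁻¹ + 1) * b ^ (-t⁻¹) := by
  rw [integral_comp_abs (f := fun u => exp (-b * u ^ t)), integral_exp_neg_mul_rpow ht hb]
  ring_nf

lemma rpow_neg_div_mul_rpow_inv_le {a m r : ℝ} {n : ℕ} (hn : 0 < n) (ha : 0 ≤ a) (hr : 0 ≤ r)
    (h : a ≤ 2 ^ m * r ^ n) : 2 ^ (-(m / n)) * a ^ (n : ℝ)⁻¹ ≤ r := by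
  have h2 : (0 : ℝ) < 2 ^ (m / n) := by positivity
  calc 2 ^ (-(m / n)) * a ^ (n : ℝ)⁻¹ ≤ 2 ^ (-(m / n)) * (2 ^ m * r ^ n) ^ (n : ℝ)⁻¹ := by
        gcongr
    _ = r := by
        rw [mul_rpow (by positivity) (by positivity), ← rpow_mul zero_le_two,
          pow_rpow_inv_natCast hr hn.ne', rpow_neg zero_le_two, ← mul_assoc, ← div_eq_mul_inv,
          inv_mul_cancel₀ h2.ne', one_mul]

section lpnorm
variable {p : ℝ≥0∞} {n : ℕ}

lemma lpnorm_of_ne_top (hp : p ≠ ∞) (x : Fin n → ℝ) :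
    lpnorm p x = (∑ i, |x i| ^ p.toReal) ^ p.toReal⁻¹ := by
  rw [lpnorm, if_neg hp, one_div]

lemma lpnorm_top (x : Fin n → ℝ) : lpnorm ∞ x = ⨆ i, |x i| := if_pos rfl

lemma lpnorm_le_one_iff_sum_rpow_le_one (hp₀ : 0 < p) (hp : p ≠ ∞) {x : Fin n → ℝ} :
    lpnorm p x ≤ 1 ↔ ∑ i, |x i| ^ p.toReal ≤ 1 := by
  rw [lpnorm_of_ne_top hp, rpow_inv_le_iff_of_pos (by positivity) zero_le_one
    (ENNReal.toReal_pos hp₀.ne' hp), one_rpow]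

lemma lpnorm_nonneg (x : Fin n → ℝ) : 0 ≤ lpnorm p x := by
  unfold lpnorm
  split_ifs
  · exact Real.iSup_nonneg fun i => abs_nonneg _
  · positivity

lemma norm_le_lpnorm (hp₀ : 0 < p) (x : Fin n → ℝ) : ‖x‖ ≤ lpnorm p x := by
  refine (pi_norm_le_iff_of_nonneg (lpnorm_nonneg x)).mpr fun i => ?_
  rcases eq_or_ne p ∞ with rfl | hp
  · rw [lpnorm_top, Real.norm_eq_abs]
    exact le_ciSup (Set.finite_range fun j => |x j|).bddAbove i
  · have ht : 0 < p.toReal := ENNReal.toReal_pos hp₀.ne' hp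
    rw [lpnorm_of_ne_top hp, Real.norm_eq_abs, le_rpow_inv_iff_of_pos (abs_nonneg _)
      (by positivity) ht]
    exact Finset.single_le_sum (f := fun j => |x j| ^ p.toReal) (fun j _ => by positivity)
      (Finset.mem_univ i)

lemma lpnorm_le_card_rpow_mul_norm (hp₀ : 0 < p) (x : Fin n → ℝ) :
    lpnorm p x ≤ (n : ℝ) ^ p⁻¹.toReal * ‖x‖ := by
  rcases eq_or_ne p ∞ with rfl | hp
  · rw [lpnorm_top]
    simpa using Real.iSup_le (fun i => norm_le_pi_norm x i) (norm_nonneg x)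
  · have ht : 0 < p.toReal := ENNReal.toReal_pos hp₀.ne' hp
    have hsum : ∑ i, |x i| ^ p.toReal ≤ n * ‖x‖ ^ p.toReal := by
      simpa using Finset.sum_le_sum fun i (_ : i ∈ Finset.univ) =>
        rpow_le_rpow (abs_nonneg _) (norm_le_pi_norm x i) ht.le
    calc lpnorm p x ≤ (n * ‖x‖ ^ p.toReal) ^ p.toReal⁻¹ := by
          rw [lpnorm_of_ne_top hp]; gcongr
      _ = (n : ℝ) ^ p⁻¹.toReal * ‖x‖ := by
          rw [mul_rpow (by positivity) (by positivity), rpow_rpow_inv (norm_nonneg x) ht.ne',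
            ENNReal.toReal_inv]

lemma lpnorm_smul_of_nonneg (hp₀ : 0 < p) {c : ℝ} (hc : 0 ≤ c) (x : Fin n → ℝ) :
    lpnorm p (c • x) = c * lpnorm p x := by
  rcases eq_or_ne p ∞ with rfl | hp
  · simp only [lpnorm_top, Pi.smul_apply, smul_eq_mul, abs_mul, abs_of_nonneg hc]
    exact (Real.mul_iSup_of_nonneg hc _).symm
  · have ht : 0 < p.toReal := ENNReal.toReal_pos hp₀.ne' hp
    simp only [lpnorm_of_ne_top hp, Pi.smul_apply, smul_eq_mul, abs_mul, abs_of_nonneg hc,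
      mul_rpow hc (abs_nonneg _), ← Finset.mul_sum]
    rw [mul_rpow (by positivity) (by positivity), rpow_rpow_inv hc ht.ne']

end lpnorm

def lpBall (p : ℝ≥0∞) (n : ℕ) : Set (Fin n → ℝ) := {x | lpnorm p x ≤ 1}

section lpBall
variable {p : ℝ≥0∞} {n : ℕ}

lemma mem_smul_lpBall_of_lpnorm_le (hp₀ : 0 < p) {r : ℝ} (hr : 0 < r) {x : Fin n → ℝ}
    (hx : lpnorm p x ≤ r) : x ∈ r • lpBall p n := by
  rw [mem_smul_set_iff_inv_smul_mem₀ hr.ne', lpBall, mem_ofPred_eq,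
    lpnorm_smul_of_nonneg hp₀ (inv_nonneg.mpr hr.le)]
  exact inv_mul_le_one_of_le₀ hx hr.le

lemma lpBall_subset_closedBall (hp₀ : 0 < p) : lpBall p n ⊆ Metric.closedBall 0 1 :=
  fun x hx => mem_closedBall_zero_iff.mpr ((norm_le_lpnorm hp₀ x).trans hx)

lemma closedBall_subset_lpBall (hp₀ : 0 < p) (hn : 0 < n) :
    Metric.closedBall 0 ((n : ℝ) ^ (-p⁻¹.toReal)) ⊆ lpBall p n := by
  intro x hx
  have hn' : (0 : ℝ) < n := Nat.cast_pos.mpr hn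
  calc lpnorm p x ≤ (n : ℝ) ^ p⁻¹.toReal * ‖x‖ := lpnorm_le_card_rpow_mul_norm hp₀ x
    _ ≤ (n : ℝ) ^ p⁻¹.toReal * (n : ℝ) ^ (-p⁻¹.toReal) := by
        gcongr; exact mem_closedBall_zero_iff.mp hx
    _ = 1 := by rw [← rpow_add hn', add_neg_cancel, rpow_zero]

lemma volume_lpBall_le_two_pow (hp₀ : 0 < p) : volume (lpBall p n) ≤ ENNReal.ofReal (2 ^ n) := by
  simpa using measure_mono (μ := volume) (lpBall_subset_closedBall (n := n) hp₀)

lemma volume_lpBall_ne_top (hp₀ : 0 < p) : volume (lpBall p n) ≠ ∞ :=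
  ne_top_of_le_ne_top ENNReal.ofReal_ne_top (volume_lpBall_le_two_pow hp₀)

lemma pow_le_volume_lpBall_toReal (hp₀ : 0 < p) (hn : 0 < n) :
    (2 * (n : ℝ) ^ (-p⁻¹.toReal)) ^ n ≤ (volume (lpBall p n)).toReal := by
  have h := measure_mono (μ := volume) (closedBall_subset_lpBall hp₀ hn)
  rw [Real.volume_pi_closedBall _ (by positivity), Fintype.card_fin] at h
  rw [← ENNReal.toReal_ofReal (by positivity : (0 : ℝ) ≤ (2 * (n : ℝ) ^ (-p⁻¹.toReal)) ^ n)]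
  exact ENNReal.toReal_mono (volume_lpBall_ne_top hp₀) h

lemma volume_lpBall_toReal_pos (hp₀ : 0 < p) (hn : 0 < n) : 0 < (volume (lpBall p n)).toReal :=
  (by positivity : (0 : ℝ) < (2 * (n : ℝ) ^ (-p⁻¹.toReal)) ^ n).trans_le
    (pow_le_volume_lpBall_toReal hp₀ hn)

lemma volume_lpBall_toReal_le (hp₀ : 0 < p) (hn : 0 < n) :
    (volume (lpBall p n)).toReal ≤
      (2 * exp 1 * Gamma (p⁻¹.toReal + 1) * (n : ℝ) ^ (-p⁻¹.toReal)) ^ n := by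
  have hn' : (0 : ℝ) < n := Nat.cast_pos.mpr hn
  rcases eq_or_ne p ∞ with rfl | hp
  · have h := ENNReal.toReal_mono ENNReal.ofReal_ne_top (volume_lpBall_le_two_pow (n := n) hp₀)
    rw [ENNReal.toReal_ofReal (by positivity)] at h
    simp only [ENNReal.inv_top, ENNReal.toReal_zero, zero_add, Gamma_one, neg_zero, rpow_zero,
      mul_one]
    exact h.trans (pow_le_pow_left₀ zero_le_two (by linarith [add_one_le_exp 1]) n)
  · have ht : 0 < p.toReal := ENNReal.toReal_pos hp₀.ne' hp
    have hint : ∫ u, exp (-n * |u| ^ p.toReal) =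
        2 * Gamma (p.toReal⁻¹ + 1) * n ^ (-p.toReal⁻¹) := integral_exp_neg_mul_abs_rpow ht hn'
    have hball : lpBall p n = {x | ∑ i, |x i| ^ p.toReal ≤ 1} :=
      Set.ext fun x => lpnorm_le_one_iff_sum_rpow_le_one hp₀ hp
    -- the integral is evaluated without knowing integrability, and it is nonzero
    have h := volume_setOf_sum_le_one_le (ι := Fin n) hn'.le
      (Integrable.of_integral_ne_zero (by rw [hint]; positivity))
    rw [← hball, hint, Fintype.card_fin] at h
    refine (ENNReal.toReal_mono ENNReal.ofReal_ne_top h).trans_eq ?_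
    rw [ENNReal.toReal_ofReal (by positivity), ENNReal.toReal_inv, ← exp_one_pow, ← mul_pow]
    ring_nf

end lpBall

section entropy
variable {p q : ℝ≥0∞} {n k : ℕ}

lemma volume_lpBall_le_of_covers (hq₀ : 0 < q) {r : ℝ} (hr : 0 < r) {S : Finset (Fin n → ℝ)}
    (hS : ∀ x : Fin n → ℝ, lpnorm p x ≤ 1 → ∃ y ∈ S, lpnorm q (x - y) ≤ r) :
    volume (lpBall p n) ≤ S.card * ENNReal.ofReal (r ^ n) * volume (lpBall q n) := by
  have hcover : lpBall p n ⊆ ⋃ y ∈ S, y +ᵥ r • lpBall q n := by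
    intro x hx
    obtain ⟨y, hyS, hxy⟩ := hS x hx
    refine mem_biUnion hyS (mem_vadd_set.mpr ⟨x - y, ?_, add_sub_cancel y x⟩)
    exact mem_smul_lpBall_of_lpnorm_le hq₀ hr hxy
  simpa [abs_of_pos hr] using measure_le_card_mul_of_subset_biUnion_vadd_smul volume hcover

lemma volume_ratio_le_entropyLp (hp₀ : 0 < p) (hq₀ : 0 < q) (hk : 0 < k) (hn : 0 < n) :
    2 ^ (-(((k : ℝ) - 1) / n)) *
      ((volume (lpBall p n)).toReal / (volume (lpBall q n)).toReal) ^ ((n : ℝ)⁻¹) ≤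
      entropyLp p q n k := by
  have hVq := volume_lpBall_toReal_pos hq₀ hn
  refine le_csInf ⟨(n : ℝ) ^ q⁻¹.toReal, by positivity, {0}, by simp [Nat.one_le_two_pow],
    fun x hx => ⟨0, by simp, ?_⟩⟩ ?_
  · calc lpnorm q (x - 0) ≤ (n : ℝ) ^ q⁻¹.toReal * ‖x‖ := by
          simpa using lpnorm_le_card_rpow_mul_norm hq₀ x
      _ ≤ (n : ℝ) ^ q⁻¹.toReal * 1 := by gcongr; exact (norm_le_lpnorm hp₀ x).trans hx
      _ = _ := mul_one _
  rintro r ⟨hr, S, hcard, hS⟩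
  refine rpow_neg_div_mul_rpow_inv_le hn (by positivity) hr.le ?_
  rw [div_le_iff₀ hVq]
  have h := ENNReal.toReal_mono (by simp [ENNReal.mul_eq_top, volume_lpBall_ne_top hq₀])
    (volume_lpBall_le_of_covers hq₀ hr hS)
  rw [ENNReal.toReal_mul, ENNReal.toReal_mul, ENNReal.toReal_ofReal (by positivity),
    ENNReal.toReal_natCast] at h
  calc (volume (lpBall p n)).toReal ≤ S.card * r ^ n * (volume (lpBall q n)).toReal := h
    _ ≤ 2 ^ (k - 1) * r ^ n * (volume (lpBall q n)).toReal := by gcongr; exact_mod_cast hcard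
    _ = 2 ^ ((k : ℝ) - 1) * r ^ n * (volume (lpBall q n)).toReal := by
        rw [← Nat.cast_pred hk, rpow_natCast]

lemma card_rpow_sub_div_le_volume_ratio (hp₀ : 0 < p) (hq₀ : 0 < q) (hn : 0 < n) :
    (n : ℝ) ^ (q⁻¹.toReal - p⁻¹.toReal) / (exp 1 * Gamma (q⁻¹.toReal + 1)) ≤
      ((volume (lpBall p n)).toReal / (volume (lpBall q n)).toReal) ^ ((n : ℝ)⁻¹) := by
  have hn' : (0 : ℝ) < n := Nat.cast_pos.mpr hn
  have hratio : (n : ℝ) ^ (q⁻¹.toReal - p⁻¹.toReal) / (exp 1 * Gamma (q⁻¹.toReal + 1)) =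
      (2 * (n : ℝ) ^ (-p⁻¹.toReal)) /
        (2 * exp 1 * Gamma (q⁻¹.toReal + 1) * (n : ℝ) ^ (-q⁻¹.toReal)) := by
    rw [sub_eq_neg_add, rpow_add hn', rpow_neg hn'.le q⁻¹.toReal]
    field_simp
  rw [hratio, le_rpow_inv_iff_of_pos (by positivity) (by positivity) hn', rpow_natCast, div_pow]
  exact div_le_div₀ (by positivity) (pow_le_volume_lpBall_toReal hp₀ hn)
    (volume_lpBall_toReal_pos hq₀ hn) (volume_lpBall_toReal_le hq₀ hn)

end entropy

open MeasureTheory in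
theorem entropy_lp_volume_lower (p q : ℝ≥0∞) (hp : 0 < p) (hq : 0 < q) :
    (∀ k n : ℕ, 0 < k → 0 < n →
      2 ^ (-(((k : ℝ) - 1) / n)) *
        ((volume {x : Fin n → ℝ | lpnorm p x ≤ 1}).toReal /
          (volume {x : Fin n → ℝ | lpnorm q x ≤ 1}).toReal) ^ ((n : ℝ)⁻¹) ≤
        entropyLp p q n k) ∧
    ∃ c : ℝ, 0 < c ∧ ∀ k n : ℕ, 0 < k → 0 < n →
      c * 2 ^ (-(((k : ℝ) - 1) / n)) * (n : ℝ) ^ (q⁻¹.toReal - p⁻¹.toReal) ≤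
        entropyLp p q n k := by
  refine ⟨fun k n hk hn => volume_ratio_le_entropyLp hp hq hk hn, ?_⟩
  refine ⟨(exp 1 * Gamma (q⁻¹.toReal + 1))⁻¹, by positivity, fun k n hk hn => ?_⟩
  calc (exp 1 * Gamma (q⁻¹.toReal + 1))⁻¹ * 2 ^ (-(((k : ℝ) - 1) / n)) *
        (n : ℝ) ^ (q⁻¹.toReal - p⁻¹.toReal)
      = 2 ^ (-(((k : ℝ) - 1) / n)) *
          ((n : ℝ) ^ (q⁻¹.toReal - p⁻¹.toReal) / (exp 1 * Gamma (q⁻¹.toReal + 1))) := by ring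
    _ ≤ 2 ^ (-(((k : ℝ) - 1) / n)) *
          ((volume (lpBall p n)).toReal / (volume (lpBall q n)).toReal) ^ ((n : ℝ)⁻¹) := by
        gcongr; exact card_rpow_sub_div_le_volume_ratio hp hq hn
    _ ≤ entropyLp p q n k := volume_ratio_le_entropyLp hp hq hk hn
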